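/- Let $H$ be a hypergraph in which every edge contains at least $k$ vertices and meets (i.e., intersects) at most $d$ other edges. Let $t \geq 2$ be an integer. If $e (1 - 1/t)^{k} ((d+1)(t-1) + 1) \leq 1$ (where $e$ is Euler's number), then $H$ has a $t$-coloring, i.e., there exists a coloring of the vertices of $H$ with $t$ colors such that every color appears on every edge at least once. -/

import Mathlib

/-!
Colour the vertices uniformly at random and let `A (f, i)` be the event that colour `i` misses
the edge `f`; it has probability `(1 - 1/t) ^ #f ≤ (1 - 1/t) ^ k`. Conditioned on `A (f, i)`,
avoiding events `A (g, i)` of the same colour, or events `A (g, j)` with `g` disjoint from `f`,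
is at least as likely as unconditionally: on `A (f, i)` the colour `i` can only hit `g` outside
`f`, and what happens outside `f` is independent of `A (f, i)`. Hence the lopsided Lovász Local
Lemma applies with at most `(d + 1) (t - 1)` neighbours per event, and its symmetric form
`e p (D + 1) ≤ 1` is exactly the hypothesis. Probabilities are counted over the finitely many
colourings of the union of the edges.
-/

open Finset

lemma inv_exp_one_le_one_sub_inv_pow (n : ℕ) : (Real.exp 1)⁻¹ ≤ (1 - ((n : ℝ) + 1)⁻¹) ^ n := by
  rcases n.eq_zero_or_pos with rfl | hn
  · simpa using inv_le_one_of_one_le₀ (Real.one_le_exp zero_le_one)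
  have : 1 - ((n : ℝ) + 1)⁻¹ = (1 + (n : ℝ)⁻¹)⁻¹ := by field_simp; ring
  rw [this, inv_pow]
  exact inv_anti₀ (by positivity) Real.one_add_inv_pow_le_exp

section LocalLemma

variable {Ω ι : Type*} [Fintype Ω] [DecidableEq Ω] (A : ι → Finset Ω)

def avoiding (S : Finset ι) : Finset Ω := {ω | ∀ j ∈ S, ω ∉ A j}

variable {A}

@[simp] lemma mem_avoiding {S : Finset ι} {ω : Ω} : ω ∈ avoiding A S ↔ ∀ j ∈ S, ω ∉ A j := by
  simp [avoiding]

@[simp] lemma avoiding_empty : avoiding A ∅ = univ := by ext; simp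

lemma avoiding_anti {S T : Finset ι} (h : S ⊆ T) : avoiding A T ⊆ avoiding A S :=
  fun _ hω ↦ mem_avoiding.2 fun j hj ↦ mem_avoiding.1 hω j (h hj)

variable [DecidableEq ι]

lemma card_avoiding_insert (a : ι) (S : Finset ι) :
    (#(avoiding A (insert a S)) : ℝ) = #(avoiding A S) - #(A a ∩ avoiding A S) := by
  have : avoiding A (insert a S) = avoiding A S \ A a := by ext; simp [and_comm]
  rw [this, inter_comm, ← card_sdiff_add_card_inter (avoiding A S) (A a)]
  push_cast
  ring

lemma prod_mul_card_avoiding_le (x : ι → ℝ) (hx : ∀ i, x i ≤ 1) (R : Finset ι) {T : Finset ι}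
    (h : ∀ T' ⊆ T, ∀ a ∈ T, a ∉ T' →
      (#(A a ∩ avoiding A (R ∪ T')) : ℝ) ≤ x a * #(avoiding A (R ∪ T'))) :
    (∏ j ∈ T, (1 - x j)) * #(avoiding A R) ≤ #(avoiding A (R ∪ T)) := by
  induction T using Finset.induction_on with
  | empty => simp
  | @insert a T ha ih =>
    have ih := ih fun T' hT' b hb ↦ h T' (hT'.trans (subset_insert a T)) b (mem_insert_of_mem hb)
    have ha := h T (subset_insert a T) a (mem_insert_self a T) ha
    rw [prod_insert ‹a ∉ T›, union_insert, card_avoiding_insert, mul_assoc]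
    nlinarith [hx a]

variable [Nonempty Ω]

theorem card_inter_avoiding_le (Γ : ι → Finset ι) (x : ι → ℝ) (hx0 : ∀ i, 0 ≤ x i)
    (hx1 : ∀ i, x i ≤ 1)
    (hlop : ∀ i S, Disjoint S (Γ i) →
      #(A i ∩ avoiding A S) * Fintype.card Ω ≤ #(A i) * #(avoiding A S))
    (hA : ∀ i, (#(A i) : ℝ) ≤ x i * (∏ j ∈ Γ i, (1 - x j)) * Fintype.card Ω)
    (S : Finset ι) {i : ι} (hi : i ∉ S) :
    (#(A i ∩ avoiding A S) : ℝ) ≤ x i * #(avoiding A S) := by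
  induction S using Finset.strongInduction generalizing i with
  | H S ih =>
  set S₁ := S ∩ Γ i
  set S₂ := S \ Γ i
  have hΩ : (0 : ℝ) < Fintype.card Ω := by exact_mod_cast Fintype.card_pos
  have hfar : (#(A i ∩ avoiding A S₂) : ℝ) ≤ x i * (∏ j ∈ Γ i, (1 - x j)) * #(avoiding A S₂) := by
    refine le_of_mul_le_mul_right ?_ hΩ
    calc (#(A i ∩ avoiding A S₂) : ℝ) * Fintype.card Ω ≤ #(A i) * #(avoiding A S₂) := by
          exact_mod_cast hlop i S₂ sdiff_disjoint
      _ ≤ x i * (∏ j ∈ Γ i, (1 - x j)) * Fintype.card Ω * #(avoiding A S₂) := by gcongr; exact hA i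
      _ = _ := by ring
  have hprod : ∏ j ∈ Γ i, (1 - x j) ≤ ∏ j ∈ S₁, (1 - x j) :=
    prod_le_prod_of_subset_of_le_one inter_subset_right (fun j _ ↦ by linarith [hx1 j])
      (fun j _ _ ↦ by linarith [hx0 j])
  have hnear : (∏ j ∈ S₁, (1 - x j)) * #(avoiding A S₂) ≤ #(avoiding A S) := by
    have := prod_mul_card_avoiding_le x hx1 S₂ (T := S₁) fun T' hT' a ha haT' ↦ by
      have haS₂ : a ∉ S₂ ∪ T' := by simp_all [S₁, S₂]
      refine ih _ ?_ haS₂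
      refine ssubset_iff_of_subset ?_ |>.2 ⟨a, (mem_inter.1 ha).1, haS₂⟩
      exact union_subset sdiff_subset (hT'.trans inter_subset_left)
    rwa [sdiff_union_inter] at this
  calc (#(A i ∩ avoiding A S) : ℝ) ≤ #(A i ∩ avoiding A S₂) := by
        gcongr; exact avoiding_anti sdiff_subset
    _ ≤ x i * ((∏ j ∈ Γ i, (1 - x j)) * #(avoiding A S₂)) := by rw [← mul_assoc]; exact hfar
    _ ≤ x i * ((∏ j ∈ S₁, (1 - x j)) * #(avoiding A S₂)) := by gcongr; exact hx0 i
    _ ≤ x i * #(avoiding A S) := by gcongr; exact hx0 i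

theorem exists_forall_notMem_of_lopsided [Fintype ι] (Γ : ι → Finset ι) (x : ι → ℝ)
    (hx0 : ∀ i, 0 ≤ x i) (hx1 : ∀ i, x i < 1)
    (hlop : ∀ i S, Disjoint S (Γ i) →
      #(A i ∩ avoiding A S) * Fintype.card Ω ≤ #(A i) * #(avoiding A S))
    (hA : ∀ i, (#(A i) : ℝ) ≤ x i * (∏ j ∈ Γ i, (1 - x j)) * Fintype.card Ω) :
    ∃ ω, ∀ i, ω ∉ A i := by
  have hx1' i := (hx1 i).le
  have hall := prod_mul_card_avoiding_le x hx1' ∅ (T := univ) fun T' _ a _ ha ↦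
    card_inter_avoiding_le Γ x hx0 hx1' hlop hA _ (by simpa using ha)
  have hpos : (0 : ℝ) < (∏ j, (1 - x j)) * #(avoiding A ∅) := by
    rw [avoiding_empty, card_univ]
    exact mul_pos (prod_pos fun j _ ↦ by linarith [hx1 j]) (by exact_mod_cast Fintype.card_pos)
  obtain ⟨ω, hω⟩ := card_pos.1 (by exact_mod_cast hpos.trans_le hall)
  exact ⟨ω, fun i ↦ mem_avoiding.1 hω i (by simp)⟩

theorem exists_forall_notMem_of_symmetric [Fintype ι] (Γ : ι → Finset ι) (p : ℝ) {D : ℕ}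
    (hD : 0 < D) (hΓ : ∀ i, #(Γ i) ≤ D)
    (hlop : ∀ i S, Disjoint S (Γ i) →
      #(A i ∩ avoiding A S) * Fintype.card Ω ≤ #(A i) * #(avoiding A S))
    (hA : ∀ i, (#(A i) : ℝ) ≤ p * Fintype.card Ω) (hp : Real.exp 1 * p * (D + 1) ≤ 1) :
    ∃ ω, ∀ i, ω ∉ A i := by
  set x : ℝ := ((D : ℝ) + 1)⁻¹
  have hx0 : 0 ≤ x := by positivity
  have hx1 : x < 1 := inv_lt_one_of_one_lt₀ (by norm_cast; omega)
  refine exists_forall_notMem_of_lopsided Γ (fun _ ↦ x) (fun _ ↦ hx0) (fun _ ↦ hx1) hlop fun i ↦ ?_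
  have hpx : p ≤ x * (Real.exp 1)⁻¹ := by
    rw [show x * (Real.exp 1)⁻¹ = 1 / (Real.exp 1 * (D + 1)) by simp [x, mul_comm],
      le_div_iff₀ (by positivity)]
    linarith
  calc (#(A i) : ℝ) ≤ p * Fintype.card Ω := hA i
    _ ≤ x * (1 - x) ^ D * Fintype.card Ω := by
        gcongr
        exact hpx.trans (by gcongr; exact inv_exp_one_le_one_sub_inv_pow D)
    _ ≤ x * (1 - x) ^ #(Γ i) * Fintype.card Ω := by
        have : (1 - x) ^ D ≤ (1 - x) ^ #(Γ i) :=
          pow_le_pow_of_le_one (by linarith) (by linarith) (hΓ i)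
        gcongr
    _ = x * (∏ _j ∈ Γ i, (1 - x)) * Fintype.card Ω := by rw [prod_const]

end LocalLemma

section Coloring

variable {α β : Type*} [Fintype α] [DecidableEq α] [Fintype β] [DecidableEq β]

theorem card_inter_mul_card_eq_of_dependsOn {s : Set α} [DecidablePred (· ∈ s)]
    {P Q : Finset (α → β)} (hP : DependsOn (· ∈ P) s) (hQ : DependsOn (· ∈ Q) sᶜ) :
    #(P ∩ Q) * Fintype.card (α → β) = #P * #Q := by
  let swap (ωσ : (α → β) × (α → β)) : (α → β) × (α → β) :=
    (s.piecewise ωσ.1 ωσ.2, s.piecewise ωσ.2 ωσ.1)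
  have hswap : Function.Involutive swap := fun ωσ ↦ by
    ext a <;> by_cases ha : a ∈ s <;> simp [swap, ha]
  have hP' {ω σ : α → β} : s.piecewise ω σ ∈ P ↔ ω ∈ P :=
    (hP fun a ha ↦ Set.piecewise_eq_of_mem _ _ _ ha).to_iff
  have hQ' {ω σ : α → β} : s.piecewise σ ω ∈ Q ↔ ω ∈ Q :=
    (hQ fun a ha ↦ Set.piecewise_eq_of_notMem _ _ _ ha).to_iff
  rw [← card_univ, ← card_product, ← card_product]
  refine card_nbij' swap swap ?_ ?_ (fun ωσ _ ↦ hswap ωσ) (fun ωσ _ ↦ hswap ωσ)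
  · rintro ⟨ω, σ⟩ h
    simp only [coe_product, coe_inter, Set.mem_prod, Set.mem_inter_iff, mem_coe] at h ⊢
    exact ⟨hP'.2 h.1.1, hQ'.2 h.1.2⟩
  · rintro ⟨ω, σ⟩ h
    simp only [coe_product, coe_inter, Set.mem_prod, Set.mem_inter_iff, mem_coe, coe_univ,
      Set.mem_univ, and_true] at h ⊢
    exact ⟨hP'.2 h.1, hQ'.2 h.2⟩

def missingColor (s : Finset α) (b : β) : Finset (α → β) := {ω | ∀ a ∈ s, ω a ≠ b}

@[simp] lemma mem_missingColor {s : Finset α} {b : β} {ω : α → β} :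
    ω ∈ missingColor s b ↔ ∀ a ∈ s, ω a ≠ b := by
  simp [missingColor]

lemma card_missingColor [Nonempty β] (s : Finset α) (b : β) :
    (#(missingColor s b) : ℝ) = (1 - 1 / Fintype.card β) ^ #s * Fintype.card (α → β) := by
  have hpi : missingColor s b = Fintype.piFinset fun a ↦ if a ∈ s then {b}ᶜ else univ := by
    ext ω
    simp only [mem_missingColor, Fintype.mem_piFinset]
    refine forall_congr' fun a ↦ ?_
    split_ifs with ha <;> simp [ha]
  set q : ℝ := (Fintype.card β : ℝ)
  have hq : q ≠ 0 := by positivity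
  calc (#(missingColor s b) : ℝ) = ∏ a, if a ∈ s then q - 1 else q := by
        rw [hpi, Fintype.card_piFinset]
        push_cast
        refine prod_congr rfl fun a _ ↦ ?_
        split_ifs <;> simp [q, card_compl, Nat.cast_sub Fintype.card_pos]
    _ = ∏ a, (if a ∈ s then 1 - 1 / q else 1) * q :=
        prod_congr rfl fun a _ ↦ by split_ifs <;> field_simp
    _ = (1 - 1 / q) ^ #s * Fintype.card (α → β) := by
        rw [prod_mul_distrib, Fintype.prod_ite_mem, prod_const, prod_const, card_univ,
          Fintype.card_fun, Nat.cast_pow]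

variable {ι : Type*}

theorem card_missingColor_inter_avoiding_mul_le (edge : ι → Finset α) (color : ι → β) {i : ι}
    {S : Finset ι} (hS : ∀ j ∈ S, color j = color i ∨ Disjoint (edge i) (edge j)) :
    #(missingColor (edge i) (color i) ∩ avoiding (fun j ↦ missingColor (edge j) (color j)) S) *
        Fintype.card (α → β) ≤
      #(missingColor (edge i) (color i)) *
        #(avoiding (fun j ↦ missingColor (edge j) (color j)) S) := by
  set A : ι → Finset (α → β) := fun j ↦ missingColor (edge j) (color j)
  set M : Finset (α → β) := {ω | ∀ j ∈ S, ∃ a ∈ edge j, a ∉ edge i ∧ ω a = color j}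
  have hM : A i ∩ avoiding A S = A i ∩ M := by
    ext ω
    simp only [mem_inter, mem_avoiding, mem_missingColor, M, mem_filter, mem_univ, true_and, A,
      not_forall, not_not, exists_prop]
    refine and_congr_right fun hi ↦ forall₂_congr fun j hj ↦ ⟨?_, ?_⟩
    · rintro ⟨a, haj, hωa⟩
      refine ⟨a, haj, fun hai ↦ ?_, hωa⟩
      rcases hS j hj with hc | hd
      · exact hi a hai (hωa.trans hc)
      · exact disjoint_left.1 hd hai haj
    · rintro ⟨a, haj, -, hωa⟩
      exact ⟨a, haj, hωa⟩
  have hMS : M ⊆ avoiding A S := fun ω hω ↦ by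
    simp only [M, mem_filter, mem_univ, true_and] at hω
    simp only [mem_avoiding, mem_missingColor, A, not_forall, not_not, exists_prop]
    intro j hj
    obtain ⟨a, haj, -, hωa⟩ := hω j hj
    exact ⟨a, haj, hωa⟩
  have hAi : DependsOn (· ∈ A i) (edge i : Set α) := fun ω σ h ↦ by
    simp +contextual [A, h]
  have hMi : DependsOn (· ∈ M) (edge i : Set α)ᶜ := fun ω σ h ↦ by
    have h' : ∀ a ∉ edge i, ω a = σ a := h
    simp only [M, mem_filter, mem_univ, true_and]
    exact propext <| forall₂_congr fun j _ ↦ exists_congr fun a ↦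
      and_congr_right fun _ ↦ and_congr_right fun ha ↦ by rw [h' a ha]
  rw [hM, card_inter_mul_card_eq_of_dependsOn hAi hMi]
  exact Nat.mul_le_mul_left _ (card_le_card hMS)

theorem exists_coloring_of_exp_mul_le_one [Fintype ι] [DecidableEq ι] (edge : ι → Finset α)
    (k d : ℕ) (hβ : 2 ≤ Fintype.card β) (hcard : ∀ i, k ≤ #(edge i))
    (hmeet : ∀ i, #{j | j ≠ i ∧ ¬Disjoint (edge i) (edge j)} ≤ d)
    (hineq : Real.exp 1 * (1 - 1 / (Fintype.card β : ℝ)) ^ k *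
        (((d : ℝ) + 1) * ((Fintype.card β : ℝ) - 1) + 1) ≤ 1) :
    ∃ c : α → β, ∀ i b, ∃ a ∈ edge i, c a = b := by
  have : Nonempty β := Fintype.card_pos_iff.1 (by omega)
  set q := Fintype.card β
  let A (p : ι × β) : Finset (α → β) := missingColor (edge p.1) p.2
  let Γ (p : ι × β) : Finset (ι × β) :=
    ({j | ¬Disjoint (edge p.1) (edge j)} : Finset ι) ×ˢ ({p.2}ᶜ : Finset β)
  have hΓ p : #(Γ p) ≤ (d + 1) * (q - 1) := by
    rw [card_product, card_compl, card_singleton]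
    gcongr
    calc #{j | ¬Disjoint (edge p.1) (edge j)}
        ≤ #(insert p.1 ({j | j ≠ p.1 ∧ ¬Disjoint (edge p.1) (edge j)} : Finset ι)) :=
          card_le_card fun j hj ↦ by by_cases j = p.1 <;> simp_all
      _ ≤ d + 1 := (card_insert_le _ _).trans (by simpa using hmeet p.1)
  have hlop p S (hS : Disjoint S (Γ p)) :
      #(A p ∩ avoiding A S) * Fintype.card (α → β) ≤ #(A p) * #(avoiding A S) := by
    have hS' : ∀ j ∈ S, j.2 = p.2 ∨ Disjoint (edge p.1) (edge j.1) := fun j hj ↦ by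
      have := disjoint_left.1 hS hj
      simp only [Γ, mem_product, mem_filter, mem_univ, true_and, mem_compl, mem_singleton] at this
      tauto
    exact card_missingColor_inter_avoiding_mul_le (fun j : ι × β ↦ edge j.1) Prod.snd hS'
  have hA p : (#(A p) : ℝ) ≤ (1 - 1 / q) ^ k * Fintype.card (α → β) := by
    rw [card_missingColor]
    have : (0 : ℝ) ≤ 1 / q := by positivity
    have : 1 / (q : ℝ) ≤ 1 := div_le_one_of_le₀ (by norm_cast; omega) (by positivity)
    have : (1 - 1 / (q : ℝ)) ^ #(edge p.1) ≤ (1 - 1 / q) ^ k :=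
      pow_le_pow_of_le_one (by linarith) (by linarith) (hcard p.1)
    gcongr
  have hD : 0 < (d + 1) * (q - 1) := Nat.mul_pos d.succ_pos (by omega)
  obtain ⟨c, hc⟩ := exists_forall_notMem_of_symmetric Γ _ hD hΓ hlop hA (by
    rw [Nat.cast_mul, Nat.cast_sub (by omega)]
    push_cast
    linarith)
  exact ⟨c, fun i b ↦ by simpa [A] using hc (i, b)⟩

end Coloring

/-- **Theorem (McDiarmid 1997).** Let `H` be a hypergraph in which every edge
contains at least `k` vertices and meets at most `d` other edges, and let `t ≥ 2`.
If `e (1-1/t)^k ((d+1)(t-1)+1) ≤ 1` then `H` has a `t`-coloring,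
i.e. there is a coloring of the vertices with `t` colors such that every color
appears on every edge at least once. -/
theorem hypergraph_t_coloring {V : Type*} [DecidableEq V]
    (E : Finset (Finset V)) (k d t : ℕ) (ht : 2 ≤ t)
    (hcard : ∀ f ∈ E, k ≤ f.card)
    (hmeet : ∀ f ∈ E, (E.filter (fun g => g ≠ f ∧ (f ∩ g).Nonempty)).card ≤ d)
    (hineq : Real.exp 1 * (1 - 1 / (t : ℝ)) ^ k *
        (((d : ℝ) + 1) * ((t : ℝ) - 1) + 1) ≤ 1) :
    ∃ c : V → Fin t, ∀ f ∈ E, ∀ i : Fin t, ∃ v ∈ f, c v = i := by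
  set U := E.biUnion id
  let edge (f : E) : Finset U := f.1.subtype (· ∈ U)
  have hcard_edge (f : E) : #(edge f) = #f.1 := by
    rw [card_subtype, filter_true_of_mem fun v hv ↦ mem_biUnion.2 ⟨f.1, f.2, hv⟩]
  have hmeet_edge (f : E) : #{g | g ≠ f ∧ ¬Disjoint (edge f) (edge g)} ≤ d := by
    refine (card_le_card_of_injOn Subtype.val (fun g hg ↦ ?_) Subtype.val_injective.injOn).trans
      (hmeet f.1 f.2)
    simp only [coe_filter, mem_univ, true_and, Set.mem_ofPred_eq, not_disjoint_iff, edge,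
      mem_subtype] at hg
    obtain ⟨hgf, a, haf, hag⟩ := hg
    simp only [coe_filter, Set.mem_ofPred_eq]
    exact ⟨g.2, fun h ↦ hgf (Subtype.ext h), a, mem_inter.2 ⟨haf, hag⟩⟩
  obtain ⟨c, hc⟩ := exists_coloring_of_exp_mul_le_one (β := Fin t) edge k d (by simpa using ht)
    (fun f ↦ hcard_edge f ▸ hcard f.1 f.2) hmeet_edge (by simpa using hineq)
  refine ⟨fun v ↦ if hv : v ∈ U then c ⟨v, hv⟩ else ⟨0, by omega⟩, fun f hf i ↦ ?_⟩
  obtain ⟨a, ha, rfl⟩ := hc ⟨f, hf⟩ i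
  exact ⟨a, mem_subtype.1 ha, by simp⟩
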